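/- arXiv:hep-th/9308072 — 4 statements merged into one kernel-verified Lean document; each statement's English description precedes it below -/
import Mathlib

section
/- Let R and R' be q-Hecke Yang-Baxter operators on X and Y respectively. Define Q on (X⊕Y)⊗(X⊕Y) by Q|_{X⊗X} = R, Q|_{Y⊗Y} = R', Q(x⊗y) = y⊗x, and Q(y⊗x) = x⊗y + (q - q⁻¹)·y⊗x. Then Q satisfies the quantum Yang-Baxter equation (Q⊗1)(1⊗Q)(Q⊗1) = (1⊗Q)(Q⊗1)(1⊗Q) on (X⊕Y)^{⊗3}. -/
open TensorProduct LinearMap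

/-- The quantum Yang-Baxter (braid) relation `(Q⊗1)(1⊗Q)(Q⊗1) = (1⊗Q)(Q⊗1)(1⊗Q)`
for an operator on `V ⊗ V`, stated on `(V ⊗ V) ⊗ V`. -/
def Braid {k : Type*} [Field k] {V : Type*} [AddCommGroup V] [Module k V]
    (Q : V ⊗[k] V →ₗ[k] V ⊗[k] V) : Prop :=
  Q.rTensor V ∘ₗ
      ((TensorProduct.assoc k V V V).symm.toLinearMap ∘ₗ Q.lTensor V ∘ₗ
        (TensorProduct.assoc k V V V).toLinearMap) ∘ₗ
      Q.rTensor V =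
    ((TensorProduct.assoc k V V V).symm.toLinearMap ∘ₗ Q.lTensor V ∘ₗ
        (TensorProduct.assoc k V V V).toLinearMap) ∘ₗ
      Q.rTensor V ∘ₗ
      ((TensorProduct.assoc k V V V).symm.toLinearMap ∘ₗ Q.lTensor V ∘ₗ
        (TensorProduct.assoc k V V V).toLinearMap)

/-!
`Q` preserves the splitting of `(X ⊕ Y)^{⊗3}` according to which tensor factors lie in `X` and
which in `Y`. On `X^{⊗3}` and `Y^{⊗3}` the braid relation is that of `R` and `R'`. Every other
summand has one factor `w` from one space and two from the other, so it is a sum of three copies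
of `X ⊗ X` (or `Y ⊗ Y`), with `w` in the first, second or third slot; on two adjacent factors `Q`
either moves `w` to the neighbouring slot or acts by `R`. Expanding both sides of the braid
relation there and replacing `R²` by `(q - q⁻¹) R + 1`, everything cancels except terms carrying
the product of the correction coefficients of the two mixed rules, which is `0` since only the
rule for `y ⊗ x` has one.
-/

namespace YangBaxterGlue

section Action

variable {k W : Type*} [CommSemiring k] [AddCommMonoid W] [Module k W]

noncomputable def onLeft (Q : W ⊗[k] W →ₗ[k] W ⊗[k] W) :
    (W ⊗[k] W) ⊗[k] W →ₗ[k] (W ⊗[k] W) ⊗[k] W :=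
  Q.rTensor W

noncomputable def onRight (Q : W ⊗[k] W →ₗ[k] W ⊗[k] W) :
    (W ⊗[k] W) ⊗[k] W →ₗ[k] (W ⊗[k] W) ⊗[k] W :=
  (TensorProduct.assoc k W W W).symm.toLinearMap ∘ₗ Q.lTensor W ∘ₗ
    (TensorProduct.assoc k W W W).toLinearMap

@[simp]
lemma onLeft_tmul (Q : W ⊗[k] W →ₗ[k] W ⊗[k] W) (u : W ⊗[k] W) (c : W) :
    onLeft Q (u ⊗ₜ c) = Q u ⊗ₜ c :=
  rfl

@[simp]
lemma onRight_tmul_tmul (Q : W ⊗[k] W →ₗ[k] W ⊗[k] W) (a b c : W) :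
    onRight Q ((a ⊗ₜ b) ⊗ₜ c) = (TensorProduct.assoc k W W W).symm (a ⊗ₜ Q (b ⊗ₜ c)) :=
  rfl

end Action

lemma braid_iff {k W : Type*} [Field k] [AddCommGroup W] [Module k W]
    (Q : W ⊗[k] W →ₗ[k] W ⊗[k] W) :
    Braid Q ↔ onLeft Q ∘ₗ onRight Q ∘ₗ onLeft Q = onRight Q ∘ₗ onLeft Q ∘ₗ onRight Q :=
  Iff.rfl

section Diagonal

variable {k W X : Type*} [CommSemiring k] [AddCommMonoid W] [Module k W]
  [AddCommMonoid X] [Module k X] {Q : W ⊗[k] W →ₗ[k] W ⊗[k] W} {ix : X →ₗ[k] W}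
  {R : X ⊗[k] X →ₗ[k] X ⊗[k] X}

lemma onLeft_map_map (hxx : Q ∘ₗ map ix ix = map ix ix ∘ₗ R) (v : (X ⊗[k] X) ⊗[k] X) :
    onLeft Q (map (map ix ix) ix v) = map (map ix ix) ix (onLeft R v) := by
  rw [onLeft, onLeft, ← comp_apply, rTensor_comp_map, hxx, ← map_comp_rTensor, comp_apply]

lemma onRight_map_map (hxx : Q ∘ₗ map ix ix = map ix ix ∘ₗ R) (v : (X ⊗[k] X) ⊗[k] X) :
    onRight Q (map (map ix ix) ix v) = map (map ix ix) ix (onRight R v) := by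
  simp only [onRight, coe_comp, LinearEquiv.coe_coe, Function.comp_apply, map_map_assoc_symm]
  rw [← map_map_assoc, ← comp_apply (lTensor W Q), lTensor_comp_map, hxx, ← map_comp_lTensor,
    comp_apply]

lemma braid_map_map (hxx : Q ∘ₗ map ix ix = map ix ix ∘ₗ R)
    (hR : onLeft R ∘ₗ onRight R ∘ₗ onLeft R = onRight R ∘ₗ onLeft R ∘ₗ onRight R)
    (v : (X ⊗[k] X) ⊗[k] X) :
    onLeft Q (onRight Q (onLeft Q (map (map ix ix) ix v))) =
      onRight Q (onLeft Q (onRight Q (map (map ix ix) ix v))) := by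
  simp only [onLeft_map_map hxx, onRight_map_map hxx]
  exact congr_arg _ (LinearMap.congr_fun hR v)

end Diagonal

section Mixed

variable {k W X : Type*} [CommRing k] [AddCommGroup W] [Module k W] [AddCommGroup X] [Module k X]
  {Q : W ⊗[k] W →ₗ[k] W ⊗[k] W} {ix : X →ₗ[k] W} {R : X ⊗[k] X →ₗ[k] X ⊗[k] X} {w : W}
  {lam mu : k}

variable (ix w) in
noncomputable def placeFirst : X ⊗[k] X →ₗ[k] (W ⊗[k] W) ⊗[k] W :=
  map (TensorProduct.mk k W W w ∘ₗ ix) ix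

variable (ix w) in
noncomputable def placeSecond : X ⊗[k] X →ₗ[k] (W ⊗[k] W) ⊗[k] W :=
  map ((TensorProduct.mk k W W).flip w ∘ₗ ix) ix

variable (ix w) in
noncomputable def placeThird : X ⊗[k] X →ₗ[k] (W ⊗[k] W) ⊗[k] W :=
  (TensorProduct.mk k (W ⊗[k] W) W).flip w ∘ₗ map ix ix

@[simp]
lemma placeFirst_tmul (a b : X) : placeFirst ix w (a ⊗ₜ b) = (w ⊗ₜ ix a) ⊗ₜ ix b :=
  rfl

@[simp]
lemma placeSecond_tmul (a b : X) : placeSecond ix w (a ⊗ₜ b) = (ix a ⊗ₜ w) ⊗ₜ ix b :=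
  rfl

@[simp]
lemma placeThird_tmul (a b : X) : placeThird ix w (a ⊗ₜ b) = (ix a ⊗ₜ ix b) ⊗ₜ w :=
  rfl

lemma assoc_symm_tmul_map_eq_placeFirst (u : X ⊗[k] X) :
    (TensorProduct.assoc k W W W).symm (w ⊗ₜ map ix ix u) = placeFirst ix w u := by
  induction u using TensorProduct.induction_on with
  | zero => simp
  | tmul a b => simp
  | add u v hu hv => simp [tmul_add, hu, hv]

section
variable (hxx : Q ∘ₗ map ix ix = map ix ix ∘ₗ R)
include hxx

lemma onLeft_placeThird (v : X ⊗[k] X) :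
    onLeft Q (placeThird ix w v) = placeThird ix w (R v) := by
  simp [placeThird, ← comp_apply (f := Q), hxx]

lemma onRight_placeFirst (v : X ⊗[k] X) :
    onRight Q (placeFirst ix w v) = placeFirst ix w (R v) := by
  induction v using TensorProduct.induction_on with
  | zero => simp
  | tmul a b => simp [← map_tmul, ← comp_apply (f := Q), hxx, assoc_symm_tmul_map_eq_placeFirst]
  | add u v hu hv => simp [hu, hv]
end

section
variable (hxw : ∀ x, Q (ix x ⊗ₜ w) = w ⊗ₜ ix x + mu • (ix x ⊗ₜ w))
include hxw

lemma onLeft_placeSecond (v : X ⊗[k] X) :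
    onLeft Q (placeSecond ix w v) = placeFirst ix w v + mu • placeSecond ix w v := by
  induction v using TensorProduct.induction_on with
  | zero => simp
  | tmul a b => simp [hxw, add_tmul, smul_tmul']
  | add u v hu hv => simp only [map_add, hu, hv, smul_add]; abel

lemma onRight_placeThird (v : X ⊗[k] X) :
    onRight Q (placeThird ix w v) = placeSecond ix w v + mu • placeThird ix w v := by
  induction v using TensorProduct.induction_on with
  | zero => simp
  | tmul a b => simp [hxw, tmul_add, tmul_smul]
  | add u v hu hv => simp only [map_add, hu, hv, smul_add]; abel
end

section
variable (hwx : ∀ x, Q (w ⊗ₜ ix x) = ix x ⊗ₜ w + lam • (w ⊗ₜ ix x))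
include hwx

lemma onLeft_placeFirst (v : X ⊗[k] X) :
    onLeft Q (placeFirst ix w v) = placeSecond ix w v + lam • placeFirst ix w v := by
  induction v using TensorProduct.induction_on with
  | zero => simp
  | tmul a b => simp [hwx, add_tmul, smul_tmul']
  | add u v hu hv => simp only [map_add, hu, hv, smul_add]; abel

lemma onRight_placeSecond (v : X ⊗[k] X) :
    onRight Q (placeSecond ix w v) = placeThird ix w v + lam • placeSecond ix w v := by
  induction v using TensorProduct.induction_on with
  | zero => simp
  | tmul a b => simp [hwx, tmul_add, tmul_smul]
  | add u v hu hv => simp only [map_add, hu, hv, smul_add]; abel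
end

/- In the glued operator one of `lam`, `mu` is `q - q⁻¹` and the other is `0`, depending on
whether the lone factor `w` comes from `Y` or from `X`. -/
variable (hxx : Q ∘ₗ map ix ix = map ix ix ∘ₗ R)
  (hxw : ∀ x, Q (ix x ⊗ₜ w) = w ⊗ₜ ix x + mu • (ix x ⊗ₜ w))
  (hwx : ∀ x, Q (w ⊗ₜ ix x) = ix x ⊗ₜ w + lam • (w ⊗ₜ ix x))
  (hecke : ∀ u, R (R u) = (lam + mu) • R u + u) (hlm : lam * mu = 0)
include hxx hxw hwx hlm

include hecke in
lemma braid_placeFirst (v : X ⊗[k] X) :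
    onLeft Q (onRight Q (onLeft Q (placeFirst ix w v))) =
      onRight Q (onLeft Q (onRight Q (placeFirst ix w v))) := by
  simp only [onLeft_placeFirst hwx, onRight_placeSecond hwx, onLeft_placeSecond hxw,
    onLeft_placeThird hxx, onRight_placeFirst hxx, map_add, map_smul, hecke]
  linear_combination (norm := module) hlm • (placeSecond ix w v - placeFirst ix w (R v))

lemma braid_placeSecond (v : X ⊗[k] X) :
    onLeft Q (onRight Q (onLeft Q (placeSecond ix w v))) =
      onRight Q (onLeft Q (onRight Q (placeSecond ix w v))) := by
  simp only [onLeft_placeSecond hxw, onRight_placeSecond hwx, onLeft_placeFirst hwx,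
    onRight_placeThird hxw, onLeft_placeThird hxx, onRight_placeFirst hxx, map_add, map_smul]
  linear_combination (norm := module)
    hlm • (placeFirst ix w v - placeThird ix w v + (mu - lam) • placeSecond ix w v)

include hecke in
lemma braid_placeThird (v : X ⊗[k] X) :
    onLeft Q (onRight Q (onLeft Q (placeThird ix w v))) =
      onRight Q (onLeft Q (onRight Q (placeThird ix w v))) := by
  simp only [onLeft_placeThird hxx, onRight_placeThird hxw, onLeft_placeSecond hxw,
    onRight_placeSecond hwx, onRight_placeFirst hxx, map_add, map_smul, hecke]
  linear_combination (norm := module) hlm • (placeThird ix w (R v) - placeSecond ix w v)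

end Mixed

lemma apply_apply_eq_of_hecke {k V : Type*} [Field k] [AddCommGroup V] [Module k V]
    {q : k} (hq : q ≠ 0) {R : V →ₗ[k] V}
    (hR : (R - q • LinearMap.id) ∘ₗ (R + q⁻¹ • LinearMap.id) = 0) (u : V) :
    R (R u) = (q - q⁻¹) • R u + u := by
  have h := LinearMap.congr_fun hR u
  simp only [coe_comp, Function.comp_apply, LinearMap.add_apply, LinearMap.sub_apply,
    LinearMap.smul_apply, id_apply, map_add, map_smul, LinearMap.zero_apply] at h
  linear_combination (norm := module) h + mul_inv_cancel₀ hq • u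

lemma ext_prod_threefold {k X Y M : Type*} [CommSemiring k] [AddCommMonoid X] [Module k X]
    [AddCommMonoid Y] [Module k Y] [AddCommMonoid M] [Module k M]
    {f g : ((X × Y) ⊗[k] (X × Y)) ⊗[k] (X × Y) →ₗ[k] M}
    (h : ∀ a b c, a ∈ Set.range (inl k X Y) ∪ Set.range (inr k X Y) →
      b ∈ Set.range (inl k X Y) ∪ Set.range (inr k X Y) →
      c ∈ Set.range (inl k X Y) ∪ Set.range (inr k X Y) →
      f ((a ⊗ₜ b) ⊗ₜ c) = g ((a ⊗ₜ b) ⊗ₜ c)) :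
    f = g := by
  have hsplit (z : X × Y) : z = inl k X Y z.1 + inr k X Y z.2 := by simp
  refine TensorProduct.ext_threefold fun a b c => ?_
  rw [hsplit a, hsplit b, hsplit c]
  simp only [tmul_add, add_tmul, map_add, h, Set.mem_union, Set.mem_range_self, true_or, or_true]

end YangBaxterGlue

open YangBaxterGlue

theorem stmt1_general {k : Type*} [Field k] {X Y : Type*}
    [AddCommGroup X] [Module k X] [AddCommGroup Y] [Module k Y]
    (q : k) (hq : q ≠ 0)
    (R : X ⊗[k] X →ₗ[k] X ⊗[k] X) (R' : Y ⊗[k] Y →ₗ[k] Y ⊗[k] Y)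
    (hRbraid : Braid R) (hR'braid : Braid R')
    (hRHecke : (R - q • LinearMap.id) ∘ₗ (R + q⁻¹ • LinearMap.id) = 0)
    (hR'Hecke : (R' - q • LinearMap.id) ∘ₗ (R' + q⁻¹ • LinearMap.id) = 0)
    (Q : (X × Y) ⊗[k] (X × Y) →ₗ[k] (X × Y) ⊗[k] (X × Y))
    (hXX : Q ∘ₗ TensorProduct.map (LinearMap.inl k X Y) (LinearMap.inl k X Y) =
      TensorProduct.map (LinearMap.inl k X Y) (LinearMap.inl k X Y) ∘ₗ R)
    (hYY : Q ∘ₗ TensorProduct.map (LinearMap.inr k X Y) (LinearMap.inr k X Y) =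
      TensorProduct.map (LinearMap.inr k X Y) (LinearMap.inr k X Y) ∘ₗ R')
    (hXY : ∀ (x : X) (y : Y),
      Q ((x, (0 : Y)) ⊗ₜ[k] ((0 : X), y)) = ((0 : X), y) ⊗ₜ[k] (x, (0 : Y)))
    (hYX : ∀ (y : Y) (x : X),
      Q (((0 : X), y) ⊗ₜ[k] (x, (0 : Y))) =
        (x, (0 : Y)) ⊗ₜ[k] ((0 : X), y) +
          (q - q⁻¹) • (((0 : X), y) ⊗ₜ[k] (x, (0 : Y)))) :
    Braid Q := by
  have hXY' (y : Y) (x : X) : Q (inl k X Y x ⊗ₜ inr k X Y y) =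
      inr k X Y y ⊗ₜ inl k X Y x + (0 : k) • (inl k X Y x ⊗ₜ inr k X Y y) := by
    simpa using hXY x y
  have hRHecke' (u : X ⊗[k] X) : R (R u) = (q - q⁻¹ + 0) • R u + u := by
    simpa using apply_apply_eq_of_hecke hq hRHecke u
  have hR'Hecke' (u : Y ⊗[k] Y) : R' (R' u) = (0 + (q - q⁻¹)) • R' u + u := by
    simpa using apply_apply_eq_of_hecke hq hR'Hecke u
  rw [braid_iff]
  refine ext_prod_threefold ?_
  rintro _ _ _ (⟨x₁, rfl⟩ | ⟨y₁, rfl⟩) (⟨x₂, rfl⟩ | ⟨y₂, rfl⟩) (⟨x₃, rfl⟩ | ⟨y₃, rfl⟩)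
  · exact braid_map_map hXX hRbraid ((x₁ ⊗ₜ x₂) ⊗ₜ x₃)
  · exact braid_placeThird hXX (hXY' y₃) (hYX y₃) hRHecke' (mul_zero _) (x₁ ⊗ₜ x₂)
  · exact braid_placeSecond hXX (hXY' y₂) (hYX y₂) (mul_zero _) (x₁ ⊗ₜ x₃)
  · exact braid_placeFirst hYY (hYX · x₁) (hXY' · x₁) hR'Hecke' (zero_mul _) (y₂ ⊗ₜ y₃)
  · exact braid_placeFirst hXX (hXY' y₁) (hYX y₁) hRHecke' (mul_zero _) (x₂ ⊗ₜ x₃)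
  · exact braid_placeSecond hYY (hYX · x₂) (hXY' · x₂) (zero_mul _) (y₁ ⊗ₜ y₃)
  · exact braid_placeThird hYY (hYX · x₃) (hXY' · x₃) hR'Hecke' (zero_mul _) (y₁ ⊗ₜ y₂)
  · exact braid_map_map hYY hR'braid ((y₁ ⊗ₜ y₂) ⊗ₜ y₃)

/-- the glueing `Q = R ⊕_q R'` of two `q`-Hecke Yang-Baxter operators
satisfies the quantum Yang-Baxter equation on `(X ⊕ Y)^{⊗3}`. -/
theorem stmt1 {k : Type*} [Field k] {X Y : Type*}
    [AddCommGroup X] [Module k X] [AddCommGroup Y] [Module k Y]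
    (q : k) (hq : q ≠ 0)
    (R : X ⊗[k] X →ₗ[k] X ⊗[k] X) (R' : Y ⊗[k] Y →ₗ[k] Y ⊗[k] Y)
    (hRbij : Function.Bijective R) (hR'bij : Function.Bijective R')
    (hRbraid : Braid R) (hR'braid : Braid R')
    (hRHecke : (R - q • LinearMap.id) ∘ₗ (R + q⁻¹ • LinearMap.id) = 0)
    (hR'Hecke : (R' - q • LinearMap.id) ∘ₗ (R' + q⁻¹ • LinearMap.id) = 0)
    (Q : (X × Y) ⊗[k] (X × Y) →ₗ[k] (X × Y) ⊗[k] (X × Y))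
    (hXX : Q ∘ₗ TensorProduct.map (LinearMap.inl k X Y) (LinearMap.inl k X Y) =
      TensorProduct.map (LinearMap.inl k X Y) (LinearMap.inl k X Y) ∘ₗ R)
    (hYY : Q ∘ₗ TensorProduct.map (LinearMap.inr k X Y) (LinearMap.inr k X Y) =
      TensorProduct.map (LinearMap.inr k X Y) (LinearMap.inr k X Y) ∘ₗ R')
    (hXY : ∀ (x : X) (y : Y),
      Q ((x, (0 : Y)) ⊗ₜ[k] ((0 : X), y)) = ((0 : X), y) ⊗ₜ[k] (x, (0 : Y)))
    (hYX : ∀ (y : Y) (x : X),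
      Q (((0 : X), y) ⊗ₜ[k] (x, (0 : Y))) =
        (x, (0 : Y)) ⊗ₜ[k] ((0 : X), y) +
          (q - q⁻¹) • (((0 : X), y) ⊗ₜ[k] (x, (0 : Y)))) :
    Braid Q :=
  stmt1_general q hq R R' hRbraid hR'braid hRHecke hR'Hecke Q hXX hYY hXY hYX
end

section
/- The glueing Q = R ⊕_q R' of two q-Hecke Yang-Baxter operators R on X and R' on Y is itself a q-Hecke operator, i.e. (Q - q)(Q + q⁻¹) = 0 on (X⊕Y)⊗(X⊕Y). -/
open TensorProduct LinearMap

/-!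
`(X × Y) ⊗ (X × Y)` splits into the `Q`-stable pieces `X ⊗ X`, `Y ⊗ Y` and `X ⊗ Y ⊕ Y ⊗ X`.
On `X ⊗ X` and `Y ⊗ Y` the map `Q` is intertwined with `R` and `R'` by the inclusions, so the
Hecke relation is inherited. On a mixed pair `u = x ⊗ y`, `v = y ⊗ x` the glueing rules say
`Q u = v` and `Q v = u + (q - q⁻¹) v`, which is the Hecke relation `Q² = (q - q⁻¹) Q + 1`.
-/

section Hecke

variable {k M N : Type*} [Field k] [AddCommGroup M] [Module k M] [AddCommGroup N] [Module k N]

theorem hecke_eq_sq_sub (q : k) (hq : q ≠ 0) (Q : M →ₗ[k] M) :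
    (Q - q • LinearMap.id) ∘ₗ (Q + q⁻¹ • LinearMap.id) =
      Q ∘ₗ Q - (q - q⁻¹) • Q - LinearMap.id := by
  ext m
  simp only [comp_apply, LinearMap.sub_apply, LinearMap.add_apply, LinearMap.smul_apply,
    id_apply, map_add, map_smul]
  rw [smul_sub, smul_smul, inv_mul_cancel₀ hq, one_smul]
  module

theorem hecke_comp_of_comp_eq (q : k) {Q : N →ₗ[k] N} {R : M →ₗ[k] M} {f : M →ₗ[k] N}
    (h : Q ∘ₗ f = f ∘ₗ R) :
    (Q - q • LinearMap.id) ∘ₗ (Q + q⁻¹ • LinearMap.id) ∘ₗ f =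
      f ∘ₗ (R - q • LinearMap.id) ∘ₗ (R + q⁻¹ • LinearMap.id) := by
  have hsub : (Q - q • LinearMap.id) ∘ₗ f = f ∘ₗ (R - q • LinearMap.id) := by
    rw [sub_comp, comp_sub, h, smul_comp, comp_smul, id_comp, comp_id]
  have hadd : (Q + q⁻¹ • LinearMap.id) ∘ₗ f = f ∘ₗ (R + q⁻¹ • LinearMap.id) := by
    rw [add_comp, comp_add, h, smul_comp, comp_smul, id_comp, comp_id]
  rw [hadd, ← comp_assoc, hsub, comp_assoc]

/-- On the span of `u` and `v = Q u`, `Q` acts by the matrix `[[0, 1], [1, q - q⁻¹]]`, whose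
characteristic polynomial is `(t - q)(t + q⁻¹)`. -/
theorem hecke_apply_eq_zero_of_apply_eq (q : k) (hq : q ≠ 0) {Q : M →ₗ[k] M} {u v : M}
    (hu : Q u = v) (hv : Q v = u + (q - q⁻¹) • v) :
    ((Q - q • LinearMap.id) ∘ₗ (Q + q⁻¹ • LinearMap.id)) u = 0 ∧
      ((Q - q • LinearMap.id) ∘ₗ (Q + q⁻¹ • LinearMap.id)) v = 0 := by
  simp only [hecke_eq_sq_sub q hq, LinearMap.sub_apply, LinearMap.smul_apply, comp_apply,
    id_apply, hu, hv, map_add, map_smul]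
  constructor <;> module

end Hecke

theorem TensorProduct.ext_prod {k X Y N : Type*} [CommRing k] [AddCommGroup X] [Module k X]
    [AddCommGroup Y] [Module k Y] [AddCommGroup N] [Module k N]
    {P P' : (X × Y) ⊗[k] (X × Y) →ₗ[k] N}
    (hxx : ∀ x x' : X, P ((x, 0) ⊗ₜ (x', 0)) = P' ((x, 0) ⊗ₜ (x', 0)))
    (hxy : ∀ (x : X) (y : Y), P ((x, 0) ⊗ₜ (0, y)) = P' ((x, 0) ⊗ₜ (0, y)))
    (hyx : ∀ (y : Y) (x : X), P ((0, y) ⊗ₜ (x, 0)) = P' ((0, y) ⊗ₜ (x, 0)))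
    (hyy : ∀ y y' : Y, P ((0, y) ⊗ₜ (0, y')) = P' ((0, y) ⊗ₜ (0, y'))) :
    P = P' := by
  refine TensorProduct.ext' fun ⟨x, y⟩ ⟨x', y'⟩ => ?_
  rw [← Prod.fst_add_snd (x, y), ← Prod.fst_add_snd (x', y')]
  simp only [add_tmul, tmul_add, map_add, hxx, hxy, hyx, hyy]

theorem stmt2_general {k : Type*} [Field k] {X Y : Type*}
    [AddCommGroup X] [Module k X] [AddCommGroup Y] [Module k Y]
    (q : k) (hq : q ≠ 0)
    (R : X ⊗[k] X →ₗ[k] X ⊗[k] X) (R' : Y ⊗[k] Y →ₗ[k] Y ⊗[k] Y)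
    (hRHecke : (R - q • LinearMap.id) ∘ₗ (R + q⁻¹ • LinearMap.id) = 0)
    (hR'Hecke : (R' - q • LinearMap.id) ∘ₗ (R' + q⁻¹ • LinearMap.id) = 0)
    (Q : (X × Y) ⊗[k] (X × Y) →ₗ[k] (X × Y) ⊗[k] (X × Y))
    (hXX : Q ∘ₗ TensorProduct.map (LinearMap.inl k X Y) (LinearMap.inl k X Y) =
      TensorProduct.map (LinearMap.inl k X Y) (LinearMap.inl k X Y) ∘ₗ R)
    (hYY : Q ∘ₗ TensorProduct.map (LinearMap.inr k X Y) (LinearMap.inr k X Y) =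
      TensorProduct.map (LinearMap.inr k X Y) (LinearMap.inr k X Y) ∘ₗ R')
    (hXY : ∀ (x : X) (y : Y),
      Q ((x, (0 : Y)) ⊗ₜ[k] ((0 : X), y)) = ((0 : X), y) ⊗ₜ[k] (x, (0 : Y)))
    (hYX : ∀ (y : Y) (x : X),
      Q (((0 : X), y) ⊗ₜ[k] (x, (0 : Y))) =
        (x, (0 : Y)) ⊗ₜ[k] ((0 : X), y) +
          (q - q⁻¹) • (((0 : X), y) ⊗ₜ[k] (x, (0 : Y)))) :
    (Q - q • LinearMap.id) ∘ₗ (Q + q⁻¹ • LinearMap.id) = 0 := by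
  refine TensorProduct.ext_prod (fun x x' => ?_) (fun x y => ?_) (fun y x => ?_)
    (fun y y' => ?_)
  · simpa [hRHecke] using LinearMap.congr_fun (hecke_comp_of_comp_eq q hXX) (x ⊗ₜ x')
  · exact (hecke_apply_eq_zero_of_apply_eq q hq (hXY x y) (hYX y x)).1
  · exact (hecke_apply_eq_zero_of_apply_eq q hq (hXY x y) (hYX y x)).2
  · simpa [hR'Hecke] using LinearMap.congr_fun (hecke_comp_of_comp_eq q hYY) (y ⊗ₜ y')

/-- the glueing `Q = R ⊕_q R'` of two `q`-Hecke Yang-Baxter operators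
is itself a `q`-Hecke operator, i.e. `(Q - q)(Q + q⁻¹) = 0` on `(X⊕Y)⊗(X⊕Y)`. -/
theorem stmt2 {k : Type*} [Field k] {X Y : Type*}
    [AddCommGroup X] [Module k X] [AddCommGroup Y] [Module k Y]
    (q : k) (hq : q ≠ 0)
    (R : X ⊗[k] X →ₗ[k] X ⊗[k] X) (R' : Y ⊗[k] Y →ₗ[k] Y ⊗[k] Y)
    (hRbij : Function.Bijective R) (hR'bij : Function.Bijective R')
    (hRbraid : Braid R) (hR'braid : Braid R')
    (hRHecke : (R - q • LinearMap.id) ∘ₗ (R + q⁻¹ • LinearMap.id) = 0)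
    (hR'Hecke : (R' - q • LinearMap.id) ∘ₗ (R' + q⁻¹ • LinearMap.id) = 0)
    (Q : (X × Y) ⊗[k] (X × Y) →ₗ[k] (X × Y) ⊗[k] (X × Y))
    (hXX : Q ∘ₗ TensorProduct.map (LinearMap.inl k X Y) (LinearMap.inl k X Y) =
      TensorProduct.map (LinearMap.inl k X Y) (LinearMap.inl k X Y) ∘ₗ R)
    (hYY : Q ∘ₗ TensorProduct.map (LinearMap.inr k X Y) (LinearMap.inr k X Y) =
      TensorProduct.map (LinearMap.inr k X Y) (LinearMap.inr k X Y) ∘ₗ R')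
    (hXY : ∀ (x : X) (y : Y),
      Q ((x, (0 : Y)) ⊗ₜ[k] ((0 : X), y)) = ((0 : X), y) ⊗ₜ[k] (x, (0 : Y)))
    (hYX : ∀ (y : Y) (x : X),
      Q (((0 : X), y) ⊗ₜ[k] (x, (0 : Y))) =
        (x, (0 : Y)) ⊗ₜ[k] ((0 : X), y) +
          (q - q⁻¹) • (((0 : X), y) ⊗ₜ[k] (x, (0 : Y)))) :
    (Q - q • LinearMap.id) ∘ₗ (Q + q⁻¹ • LinearMap.id) = 0 :=
  stmt2_general q hq R R' hRHecke hR'Hecke Q hXX hYY hXY hYX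
end

section
/- Let R ∈ Mₘ⊗Mₘ and R' ∈ Mₙ⊗Mₙ. In the tensor product algebra A(R:R') ⊗ A(R':R) of the rectangular quantum matrix algebras, the elements a^i_j := Σ_{a'} b^i_{a'} ⊗ c^{a'}_j satisfy the relations of A(R), i.e. t^i_j ↦ a^i_j extends to an algebra homomorphism A(R) → A(R:R') ⊗ A(R':R). -/
open scoped TensorProduct

/-- The FRT relations `R t₁ t₂ = t₂ t₁ R'` for an `α × β` rectangular quantum
matrix algebra, i.e. `R^i_a{}^k_b t^a_{j} t^b_{l} = t^k_{b'} t^i_{a'} R'^{a'}_{j}{}^{b'}_{l}`,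
where `R ((i,k),(a,b)) = R^i_a{}^k_b`. For `α = β` and `R' = R` these are the
relations of the quantum matrix bialgebra `A(R)`. -/
inductive FRTRel (k : Type*) [Field k] {α β : Type*} [Fintype α] [Fintype β]
    (R : Matrix (α × α) (α × α) k) (R' : Matrix (β × β) (β × β) k) :
    FreeAlgebra k (α × β) → FreeAlgebra k (α × β) → Prop
  | frt (i k' : α) (j l : β) :
      FRTRel k R R'
        (∑ a : α, ∑ b : α,
          R (i, k') (a, b) • (FreeAlgebra.ι k (a, j) * FreeAlgebra.ι k (b, l)))
        (∑ a' : β, ∑ b' : β,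
          R' (a', b') (j, l) • (FreeAlgebra.ι k (k', b') * FreeAlgebra.ι k (i, a')))

/-- The rectangular quantum matrix algebra `A(R:R')`; for `R' = R` this is the
FRT bialgebra `A(R)`. -/
abbrev RectQM (k : Type*) [Field k] {α β : Type*} [Fintype α] [Fintype β]
    (R : Matrix (α × α) (α × α) k) (R' : Matrix (β × β) (β × β) k) :=
  RingQuot (FRTRel k R R')

/-- The generator `t^i_j` of `A(R:R')`. -/
noncomputable def qmGen (k : Type*) [Field k] {α β : Type*} [Fintype α] [Fintype β]
    (R : Matrix (α × α) (α × α) k) (R' : Matrix (β × β) (β × β) k) (i : α) (j : β) :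
    RectQM k R R' :=
  RingQuot.mkAlgHom k (FRTRel k R R') (FreeAlgebra.ι k (i, j))

/-!
Substituting `a = b ⊗ c` into `R a₁ a₂` and using that the `b`'s commute with the `c`'s, the
relation `R b₁ b₂ = b₂ b₁ R'` moves `R` through the first tensor factor as `R'`, and then
`R' c₁ c₂ = c₂ c₁ R` moves it through the second factor back to `R` on the right. So matrix
multiplication `(b, c) ↦ b ⊗ c` sends solutions of `A(R:R')` and `A(R':R'')` to solutions of
`A(R:R'')`, and the universal property of the quotient gives the homomorphism.
-/

theorem Finset.sum_comm₄ {M ι₁ ι₂ ι₃ ι₄ : Type*} [AddCommMonoid M]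
    [Fintype ι₁] [Fintype ι₂] [Fintype ι₃] [Fintype ι₄] (f : ι₁ → ι₂ → ι₃ → ι₄ → M) :
    ∑ a, ∑ b, ∑ c, ∑ d, f a b c d = ∑ c, ∑ d, ∑ a, ∑ b, f a b c d := by
  rw [← Fintype.sum_prod_type' (fun a b => ∑ c, ∑ d, f a b c d),
    ← Fintype.sum_prod_type' (fun c d => ∑ a, ∑ b, f a b c d)]
  simp only [fun x : ι₁ × ι₂ => (Fintype.sum_prod_type' (f x.1 x.2)).symm,
    fun y : ι₃ × ι₄ => (Fintype.sum_prod_type' (fun a b => f a b y.1 y.2)).symm]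
  exact Finset.sum_comm

/-- The relations `R t₁ t₂ = t₂ t₁ R'` of `A(R:R')`, for a matrix `t` over any algebra. -/
def IsFRT {k A : Type*} [CommSemiring k] [Semiring A] [Algebra k A] {α β : Type*}
    [Fintype α] [Fintype β] (R : Matrix (α × α) (α × α) k) (R' : Matrix (β × β) (β × β) k)
    (t : α → β → A) : Prop :=
  ∀ (i i' : α) (j j' : β),
    ∑ a, ∑ b, R (i, i') (a, b) • (t a j * t b j') =
      ∑ a', ∑ b', R' (a', b') (j, j') • (t i' b' * t i a')

section

variable {k A B : Type*} [CommSemiring k] [Semiring A] [Algebra k A] [Semiring B] [Algebra k B]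
  {α β γ : Type*} [Fintype α] [Fintype β] [Fintype γ]

open TensorProduct in
theorem IsFRT.matrixTmul {R : Matrix (α × α) (α × α) k} {R' : Matrix (β × β) (β × β) k}
    {R'' : Matrix (γ × γ) (γ × γ) k} {b : α → β → A} {c : β → γ → B}
    (hb : IsFRT R R' b) (hc : IsFRT R' R'' c) :
    IsFRT R R'' fun i j => ∑ p, b i p ⊗ₜ[k] c p j := by
  intro i i' j j'
  calc ∑ a, ∑ a₂, R (i, i') (a, a₂) • ((∑ p, b a p ⊗ₜ[k] c p j) * ∑ q, b a₂ q ⊗ₜ[k] c q j')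
      = ∑ p, ∑ q,
          (∑ a, ∑ a₂, R (i, i') (a, a₂) • (b a p * b a₂ q)) ⊗ₜ[k] (c p j * c q j') := by
        simp_rw [Finset.sum_mul_sum, Algebra.TensorProduct.tmul_mul_tmul, Finset.smul_sum,
          smul_tmul', sum_tmul]
        exact Finset.sum_comm₄ _
    _ = ∑ p, ∑ q,
          (∑ p', ∑ q', R' (p', q') (p, q) • (b i' q' * b i p')) ⊗ₜ[k] (c p j * c q j') := by
        simp only [hb i i']
    _ = ∑ p', ∑ q',
          (b i' q' * b i p') ⊗ₜ[k] ∑ p, ∑ q, R' (p', q') (p, q) • (c p j * c q j') := by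
        simp_rw [sum_tmul, tmul_sum, smul_tmul]
        exact Finset.sum_comm₄ _
    _ = ∑ p', ∑ q',
          (b i' q' * b i p') ⊗ₜ[k] ∑ a', ∑ b', R'' (a', b') (j, j') • (c q' b' * c p' a') := by
        simp only [hc _ _ j j']
    _ = ∑ a', ∑ b',
          R'' (a', b') (j, j') • ((∑ p, b i' p ⊗ₜ[k] c p b') * ∑ q, b i q ⊗ₜ[k] c q a') := by
        simp_rw [Finset.sum_mul_sum, Algebra.TensorProduct.tmul_mul_tmul, Finset.smul_sum,
          ← tmul_smul, tmul_sum]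
        rw [Finset.sum_comm, Finset.sum_comm₄]

end

section

variable {k : Type*} [Field k] {α β : Type*} [Fintype α] [Fintype β]
  {R : Matrix (α × α) (α × α) k} {R' : Matrix (β × β) (β × β) k}

theorem isFRT_qmGen : IsFRT R R' (qmGen k R R') := fun i i' j j' => by
  simpa only [qmGen, map_sum, map_smul, map_mul] using
    RingQuot.mkAlgHom_rel k (FRTRel.frt (R := R) (R' := R') i i' j j')

noncomputable def RectQM.lift {A : Type*} [Semiring A] [Algebra k A] (t : α → β → A)
    (ht : IsFRT R R' t) : RectQM k R R' →ₐ[k] A :=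
  RingQuot.liftAlgHom k ⟨FreeAlgebra.lift k fun p => t p.1 p.2, by
    rintro _ _ ⟨i, i', j, j'⟩
    simpa only [map_sum, map_smul, map_mul, FreeAlgebra.lift_ι_apply] using ht i i' j j'⟩

@[simp]
theorem RectQM.lift_qmGen {A : Type*} [Semiring A] [Algebra k A] (t : α → β → A)
    (ht : IsFRT R R' t) (i : α) (j : β) : RectQM.lift t ht (qmGen k R R' i j) = t i j := by
  simp [RectQM.lift, qmGen, RingQuot.liftAlgHom_mkAlgHom_apply]

end

/-- the map `t^i_j ↦ Σ_{a'} b^i_{a'} ⊗ c^{a'}_j` extends to an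
algebra homomorphism `A(R) → A(R:R') ⊗ A(R':R)`. -/
theorem stmt15 {k : Type*} [Field k] {m n : ℕ}
    (R : Matrix ((Fin m) × (Fin m)) ((Fin m) × (Fin m)) k)
    (R' : Matrix ((Fin n) × (Fin n)) ((Fin n) × (Fin n)) k) :
    ∃ f : RectQM k R R →ₐ[k] (RectQM k R R' ⊗[k] RectQM k R' R),
      ∀ (i j : Fin m),
        f (qmGen k R R i j) =
          ∑ a' : Fin n, qmGen k R R' i a' ⊗ₜ[k] qmGen k R' R a' j :=
  ⟨RectQM.lift _ (isFRT_qmGen.matrixTmul isFRT_qmGen), RectQM.lift_qmGen _ _⟩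
end

section
/- Let R, R' be matrices of q-Hecke Yang-Baxter operators of sizes m, n. Then the covector algebra V̌(R ⊕_q R') is isomorphic to the Z-graded braided tensor product V̌(R) ⊗_q V̌(R'): explicitly, it is generated by x₁,...,xₘ and y₁,...,yₙ with relations q x₁x₂ = x₂x₁R, q y₁y₂ = y₂y₁R' (in compact notation), together with the cross relations yᵢ xⱼ = q xⱼ yᵢ for all i, j. -/
open scoped TensorProduct

section

variable {k : Type*} [Field k] {ι : Type*} [Fintype ι] [DecidableEq ι]

/-- `R₁₂ = R ⊗ 1` as a matrix on the threefold tensor product. -/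
def pos12 (M : Matrix (ι × ι) (ι × ι) k) : Matrix (ι × ι × ι) (ι × ι × ι) k :=
  fun x y => M (x.1, x.2.1) (y.1, y.2.1) * (if x.2.2 = y.2.2 then 1 else 0)

/-- `R₁₃`, acting on the first and third tensor factors. -/
def pos13 (M : Matrix (ι × ι) (ι × ι) k) : Matrix (ι × ι × ι) (ι × ι × ι) k :=
  fun x y => M (x.1, x.2.2) (y.1, y.2.2) * (if x.2.1 = y.2.1 then 1 else 0)

/-- `R₂₃ = 1 ⊗ R` as a matrix on the threefold tensor product. -/
def pos23 (M : Matrix (ι × ι) (ι × ι) k) : Matrix (ι × ι × ι) (ι × ι × ι) k :=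
  fun x y => M (x.2.1, x.2.2) (y.2.1, y.2.2) * (if x.1 = y.1 then 1 else 0)

/-- The quantum Yang-Baxter equation `R₁₂R₁₃R₂₃ = R₂₃R₁₃R₁₂` in matrix form. -/
def MatrixQYBE (M : Matrix (ι × ι) (ι × ι) k) : Prop :=
  pos12 M * pos13 M * pos23 M = pos23 M * pos13 M * pos12 M

/-- The flip matrix `P(x⊗y) = y⊗x`. -/
def flipMat' : Matrix (ι × ι) (ι × ι) k :=
  fun p r => if p.1 = r.2 ∧ p.2 = r.1 then 1 else 0

/-- `M` is the matrix of a `q`-Hecke Yang-Baxter operator: it satisfies the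
QYBE, is invertible, and its braiding `Ř = P∘M` satisfies `(Ř−q)(Ř+q⁻¹)=0`. -/
def IsHeckeYB (q : k) (M : Matrix (ι × ι) (ι × ι) k) : Prop :=
  MatrixQYBE M ∧ IsUnit M ∧
    (flipMat' * M - q • (1 : Matrix (ι × ι) (ι × ι) k)) *
      (flipMat' * M + q⁻¹ • (1 : Matrix (ι × ι) (ι × ι) k)) = 0

end

/-- The glued R-matrix `R ⊕_q R'` (in numeric R-matrix form, with blocks
`R`, `1`, `(q−q⁻¹)P`, `1`, `R'` as in the paper). -/
def glueRmat {k : Type*} [Field k] (q : k) {α β : Type*} [DecidableEq α] [DecidableEq β]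
    (R : Matrix (α × α) (α × α) k) (R' : Matrix (β × β) (β × β) k) :
    Matrix ((α ⊕ β) × (α ⊕ β)) ((α ⊕ β) × (α ⊕ β)) k :=
  fun p r =>
    match p, r with
    | (.inl i, .inl k'), (.inl j, .inl l) => R (i, k') (j, l)
    | (.inr i, .inr k'), (.inr j, .inr l) => R' (i, k') (j, l)
    | (.inl i, .inr k'), (.inl j, .inr l) => if i = j ∧ k' = l then 1 else 0
    | (.inr i, .inl k'), (.inr j, .inl l) => if i = j ∧ k' = l then 1 else 0
    | (.inl i, .inr k'), (.inr j, .inl l) => if i = l ∧ k' = j then q - q⁻¹ else 0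
    | _, _ => 0

/-- The relations `q·xⱼxₗ = x_b x_a R^a_j{}^b_l` of the quantum covector
algebra `V̌(R)`. -/
inductive CovRel (k : Type*) [Field k] {α : Type*} [Fintype α] (q : k)
    (R : Matrix (α × α) (α × α) k) :
    FreeAlgebra k α → FreeAlgebra k α → Prop
  | rel (j l : α) :
      CovRel k q R
        (q • (FreeAlgebra.ι k j * FreeAlgebra.ι k l))
        (∑ a : α, ∑ b : α, R (a, b) (j, l) • (FreeAlgebra.ι k b * FreeAlgebra.ι k a))

/-- The quantum covector algebra `V̌(R)`. -/
abbrev CovAlg (k : Type*) [Field k] {α : Type*} [Fintype α] (q : k)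
    (R : Matrix (α × α) (α × α) k) :=
  RingQuot (CovRel k q R)

/-- The generator `x_i` of `V̌(R)`. -/
noncomputable def covGen (k : Type*) [Field k] {α : Type*} [Fintype α] (q : k)
    (R : Matrix (α × α) (α × α) k) (i : α) : CovAlg k q R :=
  RingQuot.mkAlgHom k (CovRel k q R) (FreeAlgebra.ι k i)

/-- The relations of the `ℤ`-graded braided tensor product `V̌(R) ⊗_q V̌(R')`:
the relations of `V̌(R)` on the `x`'s, those of `V̌(R')` on the `y`'s, and the
cross relations `yᵢxⱼ = q·xⱼyᵢ`. -/
inductive GradedRel (k : Type*) [Field k] {m n : ℕ} (q : k)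
    (R : Matrix ((Fin m) × (Fin m)) ((Fin m) × (Fin m)) k)
    (R' : Matrix ((Fin n) × (Fin n)) ((Fin n) × (Fin n)) k) :
    FreeAlgebra k (Fin m ⊕ Fin n) → FreeAlgebra k (Fin m ⊕ Fin n) → Prop
  | relX (j l : Fin m) :
      GradedRel k q R R'
        (q • (FreeAlgebra.ι k (Sum.inl j : Fin m ⊕ Fin n) * FreeAlgebra.ι k (Sum.inl l)))
        (∑ a : Fin m, ∑ b : Fin m,
          R (a, b) (j, l) • (FreeAlgebra.ι k (Sum.inl b : Fin m ⊕ Fin n) * FreeAlgebra.ι k (Sum.inl a)))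
  | relY (j l : Fin n) :
      GradedRel k q R R'
        (q • (FreeAlgebra.ι k (Sum.inr j : Fin m ⊕ Fin n) * FreeAlgebra.ι k (Sum.inr l)))
        (∑ a : Fin n, ∑ b : Fin n,
          R' (a, b) (j, l) • (FreeAlgebra.ι k (Sum.inr b : Fin m ⊕ Fin n) * FreeAlgebra.ι k (Sum.inr a)))
  | cross (i : Fin n) (j : Fin m) :
      GradedRel k q R R'
        (FreeAlgebra.ι k (Sum.inr i : Fin m ⊕ Fin n) * FreeAlgebra.ι k (Sum.inl j))
        (q • (FreeAlgebra.ι k (Sum.inl j : Fin m ⊕ Fin n) * FreeAlgebra.ι k (Sum.inr i)))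

/-!
Both algebras are quotients of the free algebra on `x₁,…,xₘ,y₁,…,yₙ`, so it suffices that each
family of relations holds in the other quotient. The blocks of `R ⊕_q R'` with two `x`-indices or
two `y`-indices reproduce the relations of `V̌(R)` and `V̌(R')`. The mixed entries give
`q·x y = y x` and `q·y x = (q−q⁻¹)·y x + x y`; for `q ≠ 0` the latter says `y x = q·x y`,
so both are the cross relation.
-/

namespace RingQuot

variable {S A : Type*} [CommSemiring S] [Semiring A] [Algebra S A] {r s : A → A → Prop}

noncomputable def algEquivOfRel
    (hrs : ∀ ⦃x y⦄, r x y → mkAlgHom S s x = mkAlgHom S s y)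
    (hsr : ∀ ⦃x y⦄, s x y → mkAlgHom S r x = mkAlgHom S r y) :
    RingQuot r ≃ₐ[S] RingQuot s :=
  AlgEquiv.ofAlgHom (liftAlgHom S ⟨mkAlgHom S s, hrs⟩) (liftAlgHom S ⟨mkAlgHom S r, hsr⟩)
    (by ext; simp) (by ext; simp)

theorem algEquivOfRel_mkAlgHom
    (hrs : ∀ ⦃x y⦄, r x y → mkAlgHom S s x = mkAlgHom S s y)
    (hsr : ∀ ⦃x y⦄, s x y → mkAlgHom S r x = mkAlgHom S r y) (x : A) :
    algEquivOfRel hrs hsr (mkAlgHom S r x) = mkAlgHom S s x :=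
  liftAlgHom_mkAlgHom_apply S (mkAlgHom S s) hrs x

end RingQuot

theorem smul_eq_sub_inv_smul_add_iff {k M : Type*} [Field k] [AddCommGroup M] [Module k M]
    {q : k} (hq : q ≠ 0) (u v : M) : q • u = (q - q⁻¹) • u + v ↔ u = q • v := by
  rw [← inv_smul_eq_iff₀ hq]
  constructor <;> intro h <;> linear_combination (norm := module) h

section glueRmat

variable {k : Type*} [Field k] (q : k) {α β : Type*} [Fintype α] [Fintype β]
  [DecidableEq α] [DecidableEq β] (R : Matrix (α × α) (α × α) k) (R' : Matrix (β × β) (β × β) k)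
  {M : Type*} [AddCommMonoid M] [Module k M] (f : α ⊕ β → α ⊕ β → M)

theorem sum_glueRmat_smul_inl_inl (j l : α) :
    ∑ A, ∑ B, glueRmat q R R' (A, B) (.inl j, .inl l) • f A B
      = ∑ a, ∑ b, R (a, b) (j, l) • f (.inl a) (.inl b) := by
  simp [Fintype.sum_sum_type, glueRmat, ite_and]

theorem sum_glueRmat_smul_inr_inr (j l : β) :
    ∑ A, ∑ B, glueRmat q R R' (A, B) (.inr j, .inr l) • f A B
      = ∑ a, ∑ b, R' (a, b) (j, l) • f (.inr a) (.inr b) := by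
  simp [Fintype.sum_sum_type, glueRmat, ite_and]

theorem sum_glueRmat_smul_inl_inr (j : α) (l : β) :
    ∑ A, ∑ B, glueRmat q R R' (A, B) (.inl j, .inr l) • f A B = f (.inl j) (.inr l) := by
  simp [Fintype.sum_sum_type, glueRmat, ite_and]

theorem sum_glueRmat_smul_inr_inl (j : β) (l : α) :
    ∑ A, ∑ B, glueRmat q R R' (A, B) (.inr j, .inl l) • f A B
      = (q - q⁻¹) • f (.inl l) (.inr j) + f (.inr j) (.inl l) := by
  simp [Fintype.sum_sum_type, glueRmat, ite_and]

end glueRmat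

section braidedTensor

variable {k : Type*} [Field k] {q : k} {m n : ℕ}
  {R : Matrix (Fin m × Fin m) (Fin m × Fin m) k} {R' : Matrix (Fin n × Fin n) (Fin n × Fin n) k}

local notation "πG" => RingQuot.mkAlgHom k (GradedRel k q R R')
local notation "πC" => RingQuot.mkAlgHom k (CovRel k q (glueRmat q R R'))
local notation "X" j => FreeAlgebra.ι k (Sum.inl j : Fin m ⊕ Fin n)
local notation "Y" i => FreeAlgebra.ι k (Sum.inr i : Fin m ⊕ Fin n)

theorem mkAlgHom_gradedRel_cross (i : Fin n) (j : Fin m) :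
    πG ((Y i) * X j) = q • πG ((X j) * Y i) := by
  rw [← map_smul]
  exact RingQuot.mkAlgHom_rel k (GradedRel.cross i j)

theorem mkAlgHom_gradedRel_of_covRel_glueRmat (hq : q ≠ 0) ⦃x y⦄
    (h : CovRel k q (glueRmat q R R') x y) : πG x = πG y := by
  obtain ⟨J | J, L | L⟩ := h
  · rw [sum_glueRmat_smul_inl_inl]
    exact RingQuot.mkAlgHom_rel k (GradedRel.relX J L)
  · rw [sum_glueRmat_smul_inl_inr, map_smul, mkAlgHom_gradedRel_cross]
  · rw [sum_glueRmat_smul_inr_inl, map_smul, map_add, map_smul]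
    exact (smul_eq_sub_inv_smul_add_iff (M := RingQuot (GradedRel k q R R')) hq _ _).mpr
      (mkAlgHom_gradedRel_cross J L)
  · rw [sum_glueRmat_smul_inr_inr]
    exact RingQuot.mkAlgHom_rel k (GradedRel.relY J L)

theorem mkAlgHom_covRel_glueRmat_of_gradedRel (hq : q ≠ 0) ⦃x y⦄
    (h : GradedRel k q R R' x y) : πC x = πC y := by
  obtain ⟨j, l⟩ | ⟨j, l⟩ | ⟨i, j⟩ := h
  · simpa only [sum_glueRmat_smul_inl_inl] using
      RingQuot.mkAlgHom_rel k (CovRel.rel (q := q) (R := glueRmat q R R') (.inl j) (.inl l))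
  · simpa only [sum_glueRmat_smul_inr_inr] using
      RingQuot.mkAlgHom_rel k (CovRel.rel (q := q) (R := glueRmat q R R') (.inr j) (.inr l))
  · have h := RingQuot.mkAlgHom_rel k
      (CovRel.rel (q := q) (R := glueRmat q R R') (.inr i) (.inl j))
    rw [sum_glueRmat_smul_inr_inl, map_smul, map_add, map_smul] at h
    rw [map_smul]
    exact (smul_eq_sub_inv_smul_add_iff (M := RingQuot (CovRel k q (glueRmat q R R'))) hq _ _).mp h

end braidedTensor

theorem stmt17_general {k : Type*} [Field k] (q : k) (hq : q ≠ 0) {m n : ℕ}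
    (R : Matrix ((Fin m) × (Fin m)) ((Fin m) × (Fin m)) k)
    (R' : Matrix ((Fin n) × (Fin n)) ((Fin n) × (Fin n)) k) :
    ∃ e : CovAlg k q (glueRmat q R R') ≃ₐ[k] RingQuot (GradedRel k q R R'),
      ∀ I : Fin m ⊕ Fin n,
        e (covGen k q (glueRmat q R R') I) =
          RingQuot.mkAlgHom k (GradedRel k q R R') (FreeAlgebra.ι k I) :=
  ⟨RingQuot.algEquivOfRel (mkAlgHom_gradedRel_of_covRel_glueRmat hq)
      (mkAlgHom_covRel_glueRmat_of_gradedRel hq),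
    fun I => RingQuot.algEquivOfRel_mkAlgHom _ _ (FreeAlgebra.ι k I)⟩

/-- for matrices of `q`-Hecke Yang-Baxter operators `R`, `R'`, the
covector algebra `V̌(R ⊕_q R')` is isomorphic (by a generator-preserving
isomorphism) to the `ℤ`-graded braided tensor product `V̌(R) ⊗_q V̌(R')`,
presented by generators `x₁,…,xₘ,y₁,…,yₙ` with the relations of `V̌(R)` and
`V̌(R')` and the cross relations `yᵢxⱼ = q·xⱼyᵢ`. -/
theorem stmt17 {k : Type*} [Field k] (q : k) (hq : q ≠ 0) {m n : ℕ}
    (R : Matrix ((Fin m) × (Fin m)) ((Fin m) × (Fin m)) k)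
    (R' : Matrix ((Fin n) × (Fin n)) ((Fin n) × (Fin n)) k)
    (hR : IsHeckeYB q R) (hR' : IsHeckeYB q R') :
    ∃ e : CovAlg k q (glueRmat q R R') ≃ₐ[k] RingQuot (GradedRel k q R R'),
      ∀ I : Fin m ⊕ Fin n,
        e (covGen k q (glueRmat q R R') I) =
          RingQuot.mkAlgHom k (GradedRel k q R R') (FreeAlgebra.ι k I) :=
  stmt17_general q hq R R'
end
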